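/- Let l₀,…,l₄ be ℂ-linearly independent linear forms in R and let M be the 6×6 skew-symmetric matrix over R with rows (0, l₀, l₁, 0, 0, 0), (−l₀, 0, l₂, 0, 0, 0), (−l₁, −l₂, 0, 0, 0, 0), (0, 0, 0, 0, l₁, l₂), (0, 0, 0, −l₁, 0, l₃), (0, 0, 0, −l₂, −l₃, 0) (type (c)). Then Pf(M) = 0; for every 6×6 skew-symmetric matrix M′ all of whose entries are linear forms there is a unique cubic Φ(M′) ∈ R such that Pf(M + εM′) = ε·Φ(M′) in R[ε]/(ε²); the assignment M′ ↦ Φ(M′) is ℂ-linear from the ℂ-vector space of 6×6 skew-symmetric matrices of linear forms to the ℂ-vector space of cubics; and the ℂ-dimension of the range of Φ equals 26. -/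

import Mathlib

open MvPolynomial Matrix

noncomputable section

/-- The polynomial ring `R = ℂ[x₀,…,x₄]`. -/
abbrev Rp : Type := MvPolynomial (Fin 5) ℂ

/-- The sub-Pfaffian `q_{αβ}(N)` of a `6 × 6` matrix: for `α < β` it is
`N_{ij}N_{kl} − N_{ik}N_{jl} + N_{il}N_{jk}` where `i < j < k < l` are the elements of
`{0,…,5} ∖ {α,β}`. -/
def subPf {A : Type*} [CommRing A] (N : Matrix (Fin 6) (Fin 6) A) (α β : Fin 6) : A :=
  match (List.finRange 6).filter (fun i => decide (i ≠ α) && decide (i ≠ β)) with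
  | [i, j, k, m] => N i j * N k m - N i k * N j m + N i m * N j k
  | _ => 0

/-- The Pfaffian of a `6 × 6` skew-symmetric matrix. -/
def pf {A : Type*} [CommRing A] (N : Matrix (Fin 6) (Fin 6) A) : A :=
  N 0 1 * subPf N 0 1 - N 0 2 * subPf N 0 2 + N 0 3 * subPf N 0 3
    - N 0 4 * subPf N 0 4 + N 0 5 * subPf N 0 5

/-- The matrix `M + ε M'` over `R[ε]/(ε²)`, realised via dual numbers. -/
def jet1 (M M' : Matrix (Fin 6) (Fin 6) Rp) : Matrix (Fin 6) (Fin 6) (DualNumber Rp) :=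
  Matrix.of fun i j =>
    TrivSqZeroExt.inl (M i j) + DualNumber.eps * TrivSqZeroExt.inl (M' i j)

/-- The `ℂ`-vector space of `6 × 6` skew-symmetric matrices all of whose entries are
linear forms. -/
def SkewLin : Submodule ℂ (Matrix (Fin 6) (Fin 6) Rp) where
  carrier := {N | Nᵀ = -N ∧ ∀ i j, (N i j).IsHomogeneous 1}
  add_mem' := by
    rintro a b ⟨ha1, ha2⟩ ⟨hb1, hb2⟩
    exact ⟨by rw [Matrix.transpose_add, ha1, hb1, neg_add],
      fun i j => (ha2 i j).add (hb2 i j)⟩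
  zero_mem' := ⟨by simp, fun i j => by
    simpa using MvPolynomial.isHomogeneous_zero (Fin 5) ℂ 1⟩
  smul_mem' := by
    rintro c a ⟨ha1, ha2⟩
    refine ⟨by rw [Matrix.transpose_smul, ha1, smul_neg], fun i j => ?_⟩
    have h : (c • a) i j = MvPolynomial.C c * a i j := by
      simp [Matrix.smul_apply, MvPolynomial.smul_eq_C_mul]
    rw [h]
    exact (ha2 i j).C_mul c

/-- The `ℂ`-vector space of cubic forms in `R`. -/
abbrev Cubics : Submodule ℂ Rp := homogeneousSubmodule (Fin 5) ℂ 3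


/-! ### Auxiliary machinery -/

lemma pf_eq {A : Type*} [CommRing A] (N : Matrix (Fin 6) (Fin 6) A) :
    pf N = N 0 1 * (N 2 3 * N 4 5 - N 2 4 * N 3 5 + N 2 5 * N 3 4)
         - N 0 2 * (N 1 3 * N 4 5 - N 1 4 * N 3 5 + N 1 5 * N 3 4)
         + N 0 3 * (N 1 2 * N 4 5 - N 1 4 * N 2 5 + N 1 5 * N 2 4)
         - N 0 4 * (N 1 2 * N 3 5 - N 1 3 * N 2 5 + N 1 5 * N 2 3)
         + N 0 5 * (N 1 2 * N 3 4 - N 1 3 * N 2 4 + N 1 4 * N 2 3) := rfl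

lemma degree_one_exists (d : Fin 5 →₀ ℕ) (h : d.degree = 1) : ∃ j, d = Finsupp.single j 1 := by
  have hne : d.support.Nonempty := by
    rw [Finset.nonempty_iff_ne_empty]
    intro hs
    rw [Finsupp.degree_apply, hs] at h
    simp at h
  obtain ⟨j, hj⟩ := hne
  have hj1 : 1 ≤ d j := Nat.one_le_iff_ne_zero.mpr (Finsupp.mem_support_iff.mp hj)
  have hdj : d j = 1 := le_antisymm (h ▸ Finsupp.le_degree j d) hj1
  refine ⟨j, ?_⟩
  have hsupp : d.support = {j} := by
    refine Finset.eq_singleton_iff_unique_mem.mpr ⟨hj, ?_⟩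
    intro i hi
    by_contra hij
    have hsub : ({i, j} : Finset (Fin 5)) ⊆ d.support := by
      intro x hx
      rcases Finset.mem_insert.mp hx with rfl | hx
      · exact hi
      · rwa [Finset.mem_singleton.mp hx]
    have hle : d i + d j ≤ d.degree := by
      rw [Finsupp.degree_apply]
      calc d i + d j = ∑ x ∈ ({i, j} : Finset (Fin 5)), d x := (Finset.sum_pair hij).symm
        _ ≤ _ := Finset.sum_le_sum_of_subset hsub
    have hi1 : 1 ≤ d i := Nat.one_le_iff_ne_zero.mpr (Finsupp.mem_support_iff.mp hi)
    omega
  have := (Finsupp.support_eq_singleton.mp hsupp).2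
  rwa [hdj] at this

lemma homog1_eq (p : Rp) (hp : p.IsHomogeneous 1) :
    p = ∑ j : Fin 5, C (coeff (Finsupp.single j 1) p) * X j := by
  apply MvPolynomial.ext
  intro d
  rw [MvPolynomial.coeff_sum]
  by_cases hd : ∃ j, d = Finsupp.single j 1
  · obtain ⟨j0, rfl⟩ := hd
    rw [Finset.sum_eq_single j0]
    · simp [MvPolynomial.coeff_C_mul, MvPolynomial.coeff_X']
    · intro b _ hb
      rw [MvPolynomial.coeff_C_mul, MvPolynomial.coeff_X']
      rw [if_neg, mul_zero]
      intro hEq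
      exact hb ((Finsupp.single_left_inj (one_ne_zero)).mp hEq)
    · simp
  · have hdeg : d.degree ≠ 1 := fun hdeg => hd (degree_one_exists d hdeg)
    rw [hp.coeff_eq_zero hdeg]
    refine (Finset.sum_eq_zero fun j _ => ?_).symm
    rw [MvPolynomial.coeff_C_mul, MvPolynomial.coeff_X']
    rw [if_neg, mul_zero]
    intro hEq
    exact hd ⟨j, hEq.symm⟩

variable (l : Fin 5 → Rp)

def Amat : Matrix (Fin 5) (Fin 5) ℂ :=
  Matrix.of fun i j => coeff (Finsupp.single j 1) (l i)

lemma l_eq (hl : ∀ i, (l i).IsHomogeneous 1) (i : Fin 5) :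
    l i = ∑ j : Fin 5, C (Amat l i j) * X j := homog1_eq _ (hl i)

lemma sum_CX_mul (P Q : Matrix (Fin 5) (Fin 5) ℂ) (i : Fin 5) :
    ∑ j : Fin 5, C (P i j) * (∑ k : Fin 5, C (Q j k) * X k)
      = ∑ k : Fin 5, C ((P * Q) i k) * X k := by
  simp_rw [Finset.mul_sum, ← mul_assoc, ← _root_.map_mul]
  rw [Finset.sum_comm]
  refine Finset.sum_congr rfl fun k _ => ?_
  rw [Matrix.mul_apply, map_sum, Finset.sum_mul]

lemma sum_CX_one (i : Fin 5) :
    ∑ k : Fin 5, C ((1 : Matrix (Fin 5) (Fin 5) ℂ) i k) * X k = X i := by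
  rw [Finset.sum_eq_single i] <;> simp +contextual [Matrix.one_apply, Ne.symm]

lemma Amat_isUnit (hl : ∀ i, (l i).IsHomogeneous 1) (hind : LinearIndependent ℂ l) :
    IsUnit (Amat l) := by
  rw [← Matrix.linearIndependent_rows_iff_isUnit]
  rw [Fintype.linearIndependent_iff] at hind ⊢
  intro c hc
  apply hind c
  have key : ∀ j : Fin 5, ∑ i : Fin 5, c i * Amat l i j = 0 := by
    intro j
    have := congrFun hc j
    simpa using this
  calc ∑ i, c i • l i = ∑ i, ∑ j, (c i * Amat l i j) • X j := by
        refine Finset.sum_congr rfl fun i _ => ?_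
        rw [l_eq l hl i, Finset.smul_sum]
        refine Finset.sum_congr rfl fun j _ => ?_
        simp [MvPolynomial.smul_eq_C_mul, mul_assoc]
    _ = ∑ j, ∑ i, (c i * Amat l i j) • X j := by rw [Finset.sum_comm]
    _ = ∑ j : Fin 5, (∑ i, c i * Amat l i j) • X j := by
        simp [Finset.sum_smul]
    _ = 0 := by
        refine Finset.sum_eq_zero fun j _ => ?_
        rw [key j, zero_smul]

def Bmat (hl : ∀ i, (l i).IsHomogeneous 1) (hind : LinearIndependent ℂ l) :
    Matrix (Fin 5) (Fin 5) ℂ := (Amat l)⁻¹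

def gsub (hl : ∀ i, (l i).IsHomogeneous 1) (hind : LinearIndependent ℂ l) : Fin 5 → Rp :=
  fun j => ∑ k : Fin 5, C (Bmat l hl hind j k) * X k

lemma aeval_g_l (hl : ∀ i, (l i).IsHomogeneous 1) (hind : LinearIndependent ℂ l) (i : Fin 5) :
    aeval (gsub l hl hind) (l i) = X i := by
  conv_lhs => rw [l_eq l hl i]
  rw [map_sum]
  have : ∀ j : Fin 5, aeval (gsub l hl hind) (C (Amat l i j) * X j)
      = C (Amat l i j) * gsub l hl hind j := by
    intro j
    rw [_root_.map_mul, aeval_C, aeval_X, MvPolynomial.algebraMap_eq]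
  rw [Finset.sum_congr rfl fun j _ => this j]
  show ∑ j : Fin 5, C (Amat l i j) * (∑ k : Fin 5, C (Bmat l hl hind j k) * X k) = _
  rw [sum_CX_mul,
    show Amat l * Bmat l hl hind = 1 from
      Matrix.mul_nonsing_inv _ ((Matrix.isUnit_iff_isUnit_det _).mp (Amat_isUnit l hl hind)),
    sum_CX_one]

lemma aeval_l_injective (hl : ∀ i, (l i).IsHomogeneous 1) (hind : LinearIndependent ℂ l) :
    Function.Injective (aeval l : Rp →ₐ[ℂ] Rp) := by
  have hcomp : (aeval (gsub l hl hind)).comp (aeval l) = AlgHom.id ℂ Rp := by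
    apply MvPolynomial.algHom_ext
    intro i
    rw [AlgHom.comp_apply, aeval_X, aeval_g_l l hl hind i, AlgHom.id_apply]
  intro p q h
  have hp := AlgHom.congr_fun hcomp p
  have hq := AlgHom.congr_fun hcomp q
  simp only [AlgHom.comp_apply, AlgHom.id_apply] at hp hq
  rw [← hp, ← hq, h]

lemma X_mem_span (hl : ∀ i, (l i).IsHomogeneous 1) (hind : LinearIndependent ℂ l) (j : Fin 5) :
    (X j : Rp) ∈ Submodule.span ℂ (Set.range l) := by
  have hBA : Bmat l hl hind * Amat l = 1 :=
    Matrix.nonsing_inv_mul _ ((Matrix.isUnit_iff_isUnit_det _).mp (Amat_isUnit l hl hind))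
  have : (X j : Rp) = ∑ k : Fin 5, C (Bmat l hl hind j k) * l k := by
    conv_lhs => rw [← sum_CX_one j, ← hBA]
    rw [← sum_CX_mul]
    refine (Finset.sum_congr rfl fun k _ => ?_)
    rw [← l_eq l hl k]
  rw [this]
  refine Submodule.sum_mem _ fun k _ => ?_
  rw [← MvPolynomial.smul_eq_C_mul]
  exact Submodule.smul_mem _ _ (Submodule.subset_span ⟨k, rfl⟩)

lemma homog1_mem_span (hl : ∀ i, (l i).IsHomogeneous 1) (hind : LinearIndependent ℂ l)
    (p : Rp) (hp : p.IsHomogeneous 1) : p ∈ Submodule.span ℂ (Set.range l) := by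
  rw [homog1_eq p hp]
  refine Submodule.sum_mem _ fun j _ => ?_
  rw [← MvPolynomial.smul_eq_C_mul]
  exact Submodule.smul_mem _ _ (X_mem_span l hl hind j)

/-! ### The derivative of the Pfaffian -/

def Phi0 (N : Matrix (Fin 6) (Fin 6) Rp) : Rp :=
  l 2 * l 3 * N 0 3 - l 2 * l 2 * N 0 4 + l 1 * l 2 * N 0 5
  - l 1 * l 3 * N 1 3 + l 1 * l 2 * N 1 4 - l 1 * l 1 * N 1 5
  + l 0 * l 3 * N 2 3 - l 0 * l 2 * N 2 4 + l 0 * l 1 * N 2 5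

def mtx : Matrix (Fin 6) (Fin 6) Rp :=
  !![0, l 0, l 1, 0, 0, 0;
     -l 0, 0, l 2, 0, 0, 0;
     -l 1, -l 2, 0, 0, 0, 0;
     0, 0, 0, 0, l 1, l 2;
     0, 0, 0, -l 1, 0, l 3;
     0, 0, 0, -l 2, -l 3, 0]

lemma jet1_apply (A B : Matrix (Fin 6) (Fin 6) Rp) (i j : Fin 6) :
    jet1 A B i j = TrivSqZeroExt.inl (A i j) + DualNumber.eps * TrivSqZeroExt.inl (B i j) := rfl

lemma e01 : mtx l 0 1 = l 0 := rfl
lemma e02 : mtx l 0 2 = l 1 := rfl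
lemma e03 : mtx l 0 3 = 0 := rfl
lemma e04 : mtx l 0 4 = 0 := rfl
lemma e05 : mtx l 0 5 = 0 := rfl
lemma e12 : mtx l 1 2 = l 2 := rfl
lemma e13 : mtx l 1 3 = 0 := rfl
lemma e14 : mtx l 1 4 = 0 := rfl
lemma e15 : mtx l 1 5 = 0 := rfl
lemma e23 : mtx l 2 3 = 0 := rfl
lemma e24 : mtx l 2 4 = 0 := rfl
lemma e25 : mtx l 2 5 = 0 := rfl
lemma e34 : mtx l 3 4 = l 1 := rfl
lemma e35 : mtx l 3 5 = l 2 := rfl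
lemma e45 : mtx l 4 5 = l 3 := rfl

lemma pf_mtx : pf (mtx l) = 0 := by
  rw [pf_eq, e01, e02, e03, e04, e05, e12, e13, e14, e15, e23, e24, e25, e34, e35, e45]
  ring

lemma pf_jet (N : Matrix (Fin 6) (Fin 6) Rp) :
    pf (jet1 (mtx l) N) = DualNumber.eps * TrivSqZeroExt.inl (Phi0 l N) := by
  rw [pf_eq]
  simp only [jet1_apply]
  rw [e01, e02, e03, e04, e05, e12, e13, e14, e15, e23, e24, e25, e34, e35, e45]
  refine TrivSqZeroExt.ext ?_ ?_
  · simp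
  · simp only [Phi0]
    simp
    ring

lemma h3mul {p q r : Rp} (hp : p.IsHomogeneous 1) (hq : q.IsHomogeneous 1)
    (hr : r.IsHomogeneous 1) : (p * q * r).IsHomogeneous 3 := by
  simpa using (hp.mul hq).mul hr

lemma Phi0_homog (hl : ∀ i, (l i).IsHomogeneous 1) (N : Matrix (Fin 6) (Fin 6) Rp)
    (hN : ∀ i j, (N i j).IsHomogeneous 1) : (Phi0 l N).IsHomogeneous 3 := by
  exact ((((((((h3mul (hl 2) (hl 3) (hN 0 3)).sub (h3mul (hl 2) (hl 2) (hN 0 4))).add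
    (h3mul (hl 1) (hl 2) (hN 0 5))).sub (h3mul (hl 1) (hl 3) (hN 1 3))).add
    (h3mul (hl 1) (hl 2) (hN 1 4))).sub (h3mul (hl 1) (hl 1) (hN 1 5))).add
    (h3mul (hl 0) (hl 3) (hN 2 3))).sub (h3mul (hl 0) (hl 2) (hN 2 4))).add
    (h3mul (hl 0) (hl 1) (hN 2 5))

def PhiMap (hl : ∀ i, (l i).IsHomogeneous 1) : SkewLin →ₗ[ℂ] Cubics where
  toFun N := ⟨Phi0 l N.1, Phi0_homog l hl N.1 N.2.2⟩
  map_add' a b := by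
    apply Subtype.ext
    show Phi0 l (a.1 + b.1) = Phi0 l a.1 + Phi0 l b.1
    simp only [Phi0, Matrix.add_apply]
    ring
  map_smul' c a := by
    apply Subtype.ext
    show Phi0 l (c • a.1) = c • Phi0 l a.1
    simp only [Phi0, Matrix.smul_apply, MvPolynomial.smul_eq_C_mul]
    ring

/-! ### The 26 cubic monomials -/

def tA : Fin 26 → Fin 5 := ![0,0,0,0,0,0,0,0,0,0,0,0,1,1,1,1,1,1,1,1,1,2,2,2,2,2]
def tB : Fin 26 → Fin 5 := ![0,0,0,1,1,1,1,2,2,2,3,3,1,1,1,1,2,2,2,3,3,2,2,2,3,3]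
def tC : Fin 26 → Fin 5 := ![1,2,3,1,2,3,4,2,3,4,3,4,1,2,3,4,2,3,4,3,4,2,3,4,3,4]

def S26 : Fin 26 → Rp := fun k => l (tA k) * l (tB k) * l (tC k)

def e26 : Fin 26 → (Fin 5 →₀ ℕ) := fun k =>
  Finsupp.single (tA k) 1 + Finsupp.single (tB k) 1 + Finsupp.single (tC k) 1

def f26 : Fin 26 → (Fin 5 → ℕ) := fun k i =>
  (if tA k = i then 1 else 0) + (if tB k = i then 1 else 0) + (if tC k = i then 1 else 0)

lemma e26_coe (k : Fin 26) : ⇑(e26 k) = f26 k := by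
  funext i; simp [e26, f26, Finsupp.single_apply]

lemma f26_inj : Function.Injective f26 := by decide

lemma e26_inj : Function.Injective e26 := fun a b h => f26_inj (by rw [← e26_coe, ← e26_coe, h])

lemma mon_eq (k : Fin 26) :
    (X (tA k) * X (tB k) * X (tC k) : Rp) = monomial (e26 k) 1 := by
  simp [e26, X, monomial_mul]

lemma S26_li (hl : ∀ i, (l i).IsHomogeneous 1) (hind : LinearIndependent ℂ l) :
    LinearIndependent ℂ (S26 l) := by
  have h1 : LinearIndependent ℂ (fun k => (monomial (e26 k) 1 : Rp)) := by
    have := (basisMonomials (Fin 5) ℂ).linearIndependent.comp e26 e26_inj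
    exact this
  have h2 := h1.map' (aeval l).toLinearMap
    (LinearMap.ker_eq_bot.mpr (aeval_l_injective l hl hind))
  have h3 : S26 l = (aeval l).toLinearMap ∘ (fun k => (monomial (e26 k) 1 : Rp)) := by
    funext k
    show l (tA k) * l (tB k) * l (tC k) = (aeval l).toLinearMap (monomial (e26 k) 1)
    rw [← mon_eq k]
    simp
  rw [h3]
  exact h2

def Vsp : Submodule ℂ Rp := Submodule.span ℂ (Set.range (S26 l))

lemma quad_01 (hl : ∀ i, (l i).IsHomogeneous 1) (hind : LinearIndependent ℂ l)
    (L : Rp) (hL : L.IsHomogeneous 1) : l 0 * l 1 * L ∈ Vsp l := by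
  have hsub : Submodule.span ℂ (Set.range l)
      ≤ Submodule.comap (LinearMap.mulLeft ℂ (l 0 * l 1)) (Vsp l) := by
    rw [Submodule.span_le]
    rintro _ ⟨m, rfl⟩
    have hm : l 0 * l 1 * l m ∈ Vsp l := by
      fin_cases m
      · exact Submodule.subset_span ⟨(0 : Fin 26), by show l 0 * l 0 * l 1 = l 0 * l 1 * l 0; ring⟩
      · exact Submodule.subset_span ⟨(3 : Fin 26), by show l 0 * l 1 * l 1 = l 0 * l 1 * l 1; ring⟩
      · exact Submodule.subset_span ⟨(4 : Fin 26), by show l 0 * l 1 * l 2 = l 0 * l 1 * l 2; ring⟩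
      · exact Submodule.subset_span ⟨(5 : Fin 26), by show l 0 * l 1 * l 3 = l 0 * l 1 * l 3; ring⟩
      · exact Submodule.subset_span ⟨(6 : Fin 26), by show l 0 * l 1 * l 4 = l 0 * l 1 * l 4; ring⟩
    simpa [Submodule.mem_comap, LinearMap.mulLeft_apply, mul_assoc] using hm
  have h2 := hsub (homog1_mem_span l hl hind L hL)
  simpa [Submodule.mem_comap, LinearMap.mulLeft_apply, mul_assoc] using h2

lemma quad_02 (hl : ∀ i, (l i).IsHomogeneous 1) (hind : LinearIndependent ℂ l)
    (L : Rp) (hL : L.IsHomogeneous 1) : l 0 * l 2 * L ∈ Vsp l := by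
  have hsub : Submodule.span ℂ (Set.range l)
      ≤ Submodule.comap (LinearMap.mulLeft ℂ (l 0 * l 2)) (Vsp l) := by
    rw [Submodule.span_le]
    rintro _ ⟨m, rfl⟩
    have hm : l 0 * l 2 * l m ∈ Vsp l := by
      fin_cases m
      · exact Submodule.subset_span ⟨(1 : Fin 26), by show l 0 * l 0 * l 2 = l 0 * l 2 * l 0; ring⟩
      · exact Submodule.subset_span ⟨(4 : Fin 26), by show l 0 * l 1 * l 2 = l 0 * l 2 * l 1; ring⟩
      · exact Submodule.subset_span ⟨(7 : Fin 26), by show l 0 * l 2 * l 2 = l 0 * l 2 * l 2; ring⟩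
      · exact Submodule.subset_span ⟨(8 : Fin 26), by show l 0 * l 2 * l 3 = l 0 * l 2 * l 3; ring⟩
      · exact Submodule.subset_span ⟨(9 : Fin 26), by show l 0 * l 2 * l 4 = l 0 * l 2 * l 4; ring⟩
    simpa [Submodule.mem_comap, LinearMap.mulLeft_apply, mul_assoc] using hm
  have h2 := hsub (homog1_mem_span l hl hind L hL)
  simpa [Submodule.mem_comap, LinearMap.mulLeft_apply, mul_assoc] using h2

lemma quad_03 (hl : ∀ i, (l i).IsHomogeneous 1) (hind : LinearIndependent ℂ l)
    (L : Rp) (hL : L.IsHomogeneous 1) : l 0 * l 3 * L ∈ Vsp l := by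
  have hsub : Submodule.span ℂ (Set.range l)
      ≤ Submodule.comap (LinearMap.mulLeft ℂ (l 0 * l 3)) (Vsp l) := by
    rw [Submodule.span_le]
    rintro _ ⟨m, rfl⟩
    have hm : l 0 * l 3 * l m ∈ Vsp l := by
      fin_cases m
      · exact Submodule.subset_span ⟨(2 : Fin 26), by show l 0 * l 0 * l 3 = l 0 * l 3 * l 0; ring⟩
      · exact Submodule.subset_span ⟨(5 : Fin 26), by show l 0 * l 1 * l 3 = l 0 * l 3 * l 1; ring⟩
      · exact Submodule.subset_span ⟨(8 : Fin 26), by show l 0 * l 2 * l 3 = l 0 * l 3 * l 2; ring⟩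
      · exact Submodule.subset_span ⟨(10 : Fin 26), by show l 0 * l 3 * l 3 = l 0 * l 3 * l 3; ring⟩
      · exact Submodule.subset_span ⟨(11 : Fin 26), by show l 0 * l 3 * l 4 = l 0 * l 3 * l 4; ring⟩
    simpa [Submodule.mem_comap, LinearMap.mulLeft_apply, mul_assoc] using hm
  have h2 := hsub (homog1_mem_span l hl hind L hL)
  simpa [Submodule.mem_comap, LinearMap.mulLeft_apply, mul_assoc] using h2

lemma quad_11 (hl : ∀ i, (l i).IsHomogeneous 1) (hind : LinearIndependent ℂ l)
    (L : Rp) (hL : L.IsHomogeneous 1) : l 1 * l 1 * L ∈ Vsp l := by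
  have hsub : Submodule.span ℂ (Set.range l)
      ≤ Submodule.comap (LinearMap.mulLeft ℂ (l 1 * l 1)) (Vsp l) := by
    rw [Submodule.span_le]
    rintro _ ⟨m, rfl⟩
    have hm : l 1 * l 1 * l m ∈ Vsp l := by
      fin_cases m
      · exact Submodule.subset_span ⟨(3 : Fin 26), by show l 0 * l 1 * l 1 = l 1 * l 1 * l 0; ring⟩
      · exact Submodule.subset_span ⟨(12 : Fin 26), by show l 1 * l 1 * l 1 = l 1 * l 1 * l 1; ring⟩
      · exact Submodule.subset_span ⟨(13 : Fin 26), by show l 1 * l 1 * l 2 = l 1 * l 1 * l 2; ring⟩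
      · exact Submodule.subset_span ⟨(14 : Fin 26), by show l 1 * l 1 * l 3 = l 1 * l 1 * l 3; ring⟩
      · exact Submodule.subset_span ⟨(15 : Fin 26), by show l 1 * l 1 * l 4 = l 1 * l 1 * l 4; ring⟩
    simpa [Submodule.mem_comap, LinearMap.mulLeft_apply, mul_assoc] using hm
  have h2 := hsub (homog1_mem_span l hl hind L hL)
  simpa [Submodule.mem_comap, LinearMap.mulLeft_apply, mul_assoc] using h2

lemma quad_12 (hl : ∀ i, (l i).IsHomogeneous 1) (hind : LinearIndependent ℂ l)
    (L : Rp) (hL : L.IsHomogeneous 1) : l 1 * l 2 * L ∈ Vsp l := by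
  have hsub : Submodule.span ℂ (Set.range l)
      ≤ Submodule.comap (LinearMap.mulLeft ℂ (l 1 * l 2)) (Vsp l) := by
    rw [Submodule.span_le]
    rintro _ ⟨m, rfl⟩
    have hm : l 1 * l 2 * l m ∈ Vsp l := by
      fin_cases m
      · exact Submodule.subset_span ⟨(4 : Fin 26), by show l 0 * l 1 * l 2 = l 1 * l 2 * l 0; ring⟩
      · exact Submodule.subset_span ⟨(13 : Fin 26), by show l 1 * l 1 * l 2 = l 1 * l 2 * l 1; ring⟩
      · exact Submodule.subset_span ⟨(16 : Fin 26), by show l 1 * l 2 * l 2 = l 1 * l 2 * l 2; ring⟩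
      · exact Submodule.subset_span ⟨(17 : Fin 26), by show l 1 * l 2 * l 3 = l 1 * l 2 * l 3; ring⟩
      · exact Submodule.subset_span ⟨(18 : Fin 26), by show l 1 * l 2 * l 4 = l 1 * l 2 * l 4; ring⟩
    simpa [Submodule.mem_comap, LinearMap.mulLeft_apply, mul_assoc] using hm
  have h2 := hsub (homog1_mem_span l hl hind L hL)
  simpa [Submodule.mem_comap, LinearMap.mulLeft_apply, mul_assoc] using h2

lemma quad_13 (hl : ∀ i, (l i).IsHomogeneous 1) (hind : LinearIndependent ℂ l)
    (L : Rp) (hL : L.IsHomogeneous 1) : l 1 * l 3 * L ∈ Vsp l := by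
  have hsub : Submodule.span ℂ (Set.range l)
      ≤ Submodule.comap (LinearMap.mulLeft ℂ (l 1 * l 3)) (Vsp l) := by
    rw [Submodule.span_le]
    rintro _ ⟨m, rfl⟩
    have hm : l 1 * l 3 * l m ∈ Vsp l := by
      fin_cases m
      · exact Submodule.subset_span ⟨(5 : Fin 26), by show l 0 * l 1 * l 3 = l 1 * l 3 * l 0; ring⟩
      · exact Submodule.subset_span ⟨(14 : Fin 26), by show l 1 * l 1 * l 3 = l 1 * l 3 * l 1; ring⟩
      · exact Submodule.subset_span ⟨(17 : Fin 26), by show l 1 * l 2 * l 3 = l 1 * l 3 * l 2; ring⟩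
      · exact Submodule.subset_span ⟨(19 : Fin 26), by show l 1 * l 3 * l 3 = l 1 * l 3 * l 3; ring⟩
      · exact Submodule.subset_span ⟨(20 : Fin 26), by show l 1 * l 3 * l 4 = l 1 * l 3 * l 4; ring⟩
    simpa [Submodule.mem_comap, LinearMap.mulLeft_apply, mul_assoc] using hm
  have h2 := hsub (homog1_mem_span l hl hind L hL)
  simpa [Submodule.mem_comap, LinearMap.mulLeft_apply, mul_assoc] using h2

lemma quad_22 (hl : ∀ i, (l i).IsHomogeneous 1) (hind : LinearIndependent ℂ l)
    (L : Rp) (hL : L.IsHomogeneous 1) : l 2 * l 2 * L ∈ Vsp l := by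
  have hsub : Submodule.span ℂ (Set.range l)
      ≤ Submodule.comap (LinearMap.mulLeft ℂ (l 2 * l 2)) (Vsp l) := by
    rw [Submodule.span_le]
    rintro _ ⟨m, rfl⟩
    have hm : l 2 * l 2 * l m ∈ Vsp l := by
      fin_cases m
      · exact Submodule.subset_span ⟨(7 : Fin 26), by show l 0 * l 2 * l 2 = l 2 * l 2 * l 0; ring⟩
      · exact Submodule.subset_span ⟨(16 : Fin 26), by show l 1 * l 2 * l 2 = l 2 * l 2 * l 1; ring⟩
      · exact Submodule.subset_span ⟨(21 : Fin 26), by show l 2 * l 2 * l 2 = l 2 * l 2 * l 2; ring⟩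
      · exact Submodule.subset_span ⟨(22 : Fin 26), by show l 2 * l 2 * l 3 = l 2 * l 2 * l 3; ring⟩
      · exact Submodule.subset_span ⟨(23 : Fin 26), by show l 2 * l 2 * l 4 = l 2 * l 2 * l 4; ring⟩
    simpa [Submodule.mem_comap, LinearMap.mulLeft_apply, mul_assoc] using hm
  have h2 := hsub (homog1_mem_span l hl hind L hL)
  simpa [Submodule.mem_comap, LinearMap.mulLeft_apply, mul_assoc] using h2

lemma quad_23 (hl : ∀ i, (l i).IsHomogeneous 1) (hind : LinearIndependent ℂ l)
    (L : Rp) (hL : L.IsHomogeneous 1) : l 2 * l 3 * L ∈ Vsp l := by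
  have hsub : Submodule.span ℂ (Set.range l)
      ≤ Submodule.comap (LinearMap.mulLeft ℂ (l 2 * l 3)) (Vsp l) := by
    rw [Submodule.span_le]
    rintro _ ⟨m, rfl⟩
    have hm : l 2 * l 3 * l m ∈ Vsp l := by
      fin_cases m
      · exact Submodule.subset_span ⟨(8 : Fin 26), by show l 0 * l 2 * l 3 = l 2 * l 3 * l 0; ring⟩
      · exact Submodule.subset_span ⟨(17 : Fin 26), by show l 1 * l 2 * l 3 = l 2 * l 3 * l 1; ring⟩
      · exact Submodule.subset_span ⟨(22 : Fin 26), by show l 2 * l 2 * l 3 = l 2 * l 3 * l 2; ring⟩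
      · exact Submodule.subset_span ⟨(24 : Fin 26), by show l 2 * l 3 * l 3 = l 2 * l 3 * l 3; ring⟩
      · exact Submodule.subset_span ⟨(25 : Fin 26), by show l 2 * l 3 * l 4 = l 2 * l 3 * l 4; ring⟩
    simpa [Submodule.mem_comap, LinearMap.mulLeft_apply, mul_assoc] using hm
  have h2 := hsub (homog1_mem_span l hl hind L hL)
  simpa [Submodule.mem_comap, LinearMap.mulLeft_apply, mul_assoc] using h2

lemma Phi0_mem_V (hl : ∀ i, (l i).IsHomogeneous 1) (hind : LinearIndependent ℂ l)
    (N : Matrix (Fin 6) (Fin 6) Rp) (hN : ∀ i j, (N i j).IsHomogeneous 1) :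
    Phi0 l N ∈ Vsp l := by
  simp only [Phi0]
  have h1 := quad_23 l hl hind _ (hN 0 3)
  have h2 := quad_22 l hl hind _ (hN 0 4)
  have h3 := quad_12 l hl hind _ (hN 0 5)
  have h4 := quad_13 l hl hind _ (hN 1 3)
  have h5 := quad_12 l hl hind _ (hN 1 4)
  have h6 := quad_11 l hl hind _ (hN 1 5)
  have h7 := quad_03 l hl hind _ (hN 2 3)
  have h8 := quad_02 l hl hind _ (hN 2 4)
  have h9 := quad_01 l hl hind _ (hN 2 5)
  exact (Vsp l).add_mem ((Vsp l).sub_mem ((Vsp l).add_mem ((Vsp l).sub_mem ((Vsp l).add_mem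
    ((Vsp l).sub_mem ((Vsp l).add_mem ((Vsp l).sub_mem h1 h2) h3) h4) h5) h6) h7) h8) h9

def skE (α β : Fin 6) (L : Rp) : Matrix (Fin 6) (Fin 6) Rp :=
  Matrix.single α β L - (Matrix.single α β L)ᵀ

lemma skE_transpose (α β : Fin 6) (L : Rp) : (skE α β L)ᵀ = -(skE α β L) := by
  simp [skE, Matrix.transpose_sub, Matrix.transpose_transpose, neg_sub]

lemma stdBasis_homog (α β : Fin 6) (L : Rp) (hL : L.IsHomogeneous 1) (i j : Fin 6) :
    ((Matrix.single α β L) i j).IsHomogeneous 1 := by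
  rw [Matrix.single]
  dsimp only [Matrix.of_apply]
  split_ifs
  · exact hL
  · exact MvPolynomial.isHomogeneous_zero _ _ _

lemma skE_homog (α β : Fin 6) (L : Rp) (hL : L.IsHomogeneous 1) (i j : Fin 6) :
    ((skE α β L) i j).IsHomogeneous 1 := by
  have := (stdBasis_homog α β L hL i j).sub (stdBasis_homog α β L hL j i)
  simpa [skE, Matrix.sub_apply, -Matrix.transpose_single] using this

lemma skE_mem (α β : Fin 6) (L : Rp) (hL : L.IsHomogeneous 1) : skE α β L ∈ SkewLin :=
  ⟨skE_transpose α β L, skE_homog α β L hL⟩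

set_option maxHeartbeats 3200000 in
lemma range_eq (hl : ∀ i, (l i).IsHomogeneous 1) (hind : LinearIndependent ℂ l) :
    LinearMap.range ((Submodule.subtype Cubics).comp (PhiMap l hl)) = Vsp l := by
  apply le_antisymm
  · rintro x ⟨N, rfl⟩
    show Phi0 l N.1 ∈ Vsp l
    exact Phi0_mem_V l hl hind N.1 N.2.2
  · rw [Vsp, Submodule.span_le]
    rintro x ⟨k, rfl⟩
    fin_cases k
    · exact LinearMap.mem_range.mpr ⟨⟨skE 2 5 (l 0), skE_mem 2 5 (l 0) (hl 0)⟩, by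
        show Phi0 l (skE 2 5 (l 0)) = l 0 * l 0 * l 1
        simp [Phi0, skE, Matrix.single, Matrix.sub_apply]
        try ring⟩
    · exact LinearMap.mem_range.mpr ⟨⟨skE 2 4 (-(l 0)), skE_mem 2 4 (-(l 0)) ((hl 0).neg)⟩, by
        show Phi0 l (skE 2 4 (-(l 0))) = l 0 * l 0 * l 2
        simp [Phi0, skE, Matrix.single, Matrix.sub_apply]
        try ring⟩
    · exact LinearMap.mem_range.mpr ⟨⟨skE 2 3 (l 0), skE_mem 2 3 (l 0) (hl 0)⟩, by
        show Phi0 l (skE 2 3 (l 0)) = l 0 * l 0 * l 3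
        simp [Phi0, skE, Matrix.single, Matrix.sub_apply]
        try ring⟩
    · exact LinearMap.mem_range.mpr ⟨⟨skE 2 5 (l 1), skE_mem 2 5 (l 1) (hl 1)⟩, by
        show Phi0 l (skE 2 5 (l 1)) = l 0 * l 1 * l 1
        simp [Phi0, skE, Matrix.single, Matrix.sub_apply]
        try ring⟩
    · exact LinearMap.mem_range.mpr ⟨⟨skE 2 5 (l 2), skE_mem 2 5 (l 2) (hl 2)⟩, by
        show Phi0 l (skE 2 5 (l 2)) = l 0 * l 1 * l 2
        simp [Phi0, skE, Matrix.single, Matrix.sub_apply]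
        try ring⟩
    · exact LinearMap.mem_range.mpr ⟨⟨skE 2 5 (l 3), skE_mem 2 5 (l 3) (hl 3)⟩, by
        show Phi0 l (skE 2 5 (l 3)) = l 0 * l 1 * l 3
        simp [Phi0, skE, Matrix.single, Matrix.sub_apply]
        try ring⟩
    · exact LinearMap.mem_range.mpr ⟨⟨skE 2 5 (l 4), skE_mem 2 5 (l 4) (hl 4)⟩, by
        show Phi0 l (skE 2 5 (l 4)) = l 0 * l 1 * l 4
        simp [Phi0, skE, Matrix.single, Matrix.sub_apply]
        try ring⟩
    · exact LinearMap.mem_range.mpr ⟨⟨skE 2 4 (-(l 2)), skE_mem 2 4 (-(l 2)) ((hl 2).neg)⟩, by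
        show Phi0 l (skE 2 4 (-(l 2))) = l 0 * l 2 * l 2
        simp [Phi0, skE, Matrix.single, Matrix.sub_apply]
        try ring⟩
    · exact LinearMap.mem_range.mpr ⟨⟨skE 2 4 (-(l 3)), skE_mem 2 4 (-(l 3)) ((hl 3).neg)⟩, by
        show Phi0 l (skE 2 4 (-(l 3))) = l 0 * l 2 * l 3
        simp [Phi0, skE, Matrix.single, Matrix.sub_apply]
        try ring⟩
    · exact LinearMap.mem_range.mpr ⟨⟨skE 2 4 (-(l 4)), skE_mem 2 4 (-(l 4)) ((hl 4).neg)⟩, by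
        show Phi0 l (skE 2 4 (-(l 4))) = l 0 * l 2 * l 4
        simp [Phi0, skE, Matrix.single, Matrix.sub_apply]
        try ring⟩
    · exact LinearMap.mem_range.mpr ⟨⟨skE 2 3 (l 3), skE_mem 2 3 (l 3) (hl 3)⟩, by
        show Phi0 l (skE 2 3 (l 3)) = l 0 * l 3 * l 3
        simp [Phi0, skE, Matrix.single, Matrix.sub_apply]
        try ring⟩
    · exact LinearMap.mem_range.mpr ⟨⟨skE 2 3 (l 4), skE_mem 2 3 (l 4) (hl 4)⟩, by
        show Phi0 l (skE 2 3 (l 4)) = l 0 * l 3 * l 4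
        simp [Phi0, skE, Matrix.single, Matrix.sub_apply]
        try ring⟩
    · exact LinearMap.mem_range.mpr ⟨⟨skE 1 5 (-(l 1)), skE_mem 1 5 (-(l 1)) ((hl 1).neg)⟩, by
        show Phi0 l (skE 1 5 (-(l 1))) = l 1 * l 1 * l 1
        simp [Phi0, skE, Matrix.single, Matrix.sub_apply]
        try ring⟩
    · exact LinearMap.mem_range.mpr ⟨⟨skE 1 5 (-(l 2)), skE_mem 1 5 (-(l 2)) ((hl 2).neg)⟩, by
        show Phi0 l (skE 1 5 (-(l 2))) = l 1 * l 1 * l 2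
        simp [Phi0, skE, Matrix.single, Matrix.sub_apply]
        try ring⟩
    · exact LinearMap.mem_range.mpr ⟨⟨skE 1 5 (-(l 3)), skE_mem 1 5 (-(l 3)) ((hl 3).neg)⟩, by
        show Phi0 l (skE 1 5 (-(l 3))) = l 1 * l 1 * l 3
        simp [Phi0, skE, Matrix.single, Matrix.sub_apply]
        try ring⟩
    · exact LinearMap.mem_range.mpr ⟨⟨skE 1 5 (-(l 4)), skE_mem 1 5 (-(l 4)) ((hl 4).neg)⟩, by
        show Phi0 l (skE 1 5 (-(l 4))) = l 1 * l 1 * l 4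
        simp [Phi0, skE, Matrix.single, Matrix.sub_apply]
        try ring⟩
    · exact LinearMap.mem_range.mpr ⟨⟨skE 0 5 (l 2), skE_mem 0 5 (l 2) (hl 2)⟩, by
        show Phi0 l (skE 0 5 (l 2)) = l 1 * l 2 * l 2
        simp [Phi0, skE, Matrix.single, Matrix.sub_apply]
        try ring⟩
    · exact LinearMap.mem_range.mpr ⟨⟨skE 0 5 (l 3), skE_mem 0 5 (l 3) (hl 3)⟩, by
        show Phi0 l (skE 0 5 (l 3)) = l 1 * l 2 * l 3
        simp [Phi0, skE, Matrix.single, Matrix.sub_apply]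
        try ring⟩
    · exact LinearMap.mem_range.mpr ⟨⟨skE 0 5 (l 4), skE_mem 0 5 (l 4) (hl 4)⟩, by
        show Phi0 l (skE 0 5 (l 4)) = l 1 * l 2 * l 4
        simp [Phi0, skE, Matrix.single, Matrix.sub_apply]
        try ring⟩
    · exact LinearMap.mem_range.mpr ⟨⟨skE 1 3 (-(l 3)), skE_mem 1 3 (-(l 3)) ((hl 3).neg)⟩, by
        show Phi0 l (skE 1 3 (-(l 3))) = l 1 * l 3 * l 3
        simp [Phi0, skE, Matrix.single, Matrix.sub_apply]
        try ring⟩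
    · exact LinearMap.mem_range.mpr ⟨⟨skE 1 3 (-(l 4)), skE_mem 1 3 (-(l 4)) ((hl 4).neg)⟩, by
        show Phi0 l (skE 1 3 (-(l 4))) = l 1 * l 3 * l 4
        simp [Phi0, skE, Matrix.single, Matrix.sub_apply]
        try ring⟩
    · exact LinearMap.mem_range.mpr ⟨⟨skE 0 4 (-(l 2)), skE_mem 0 4 (-(l 2)) ((hl 2).neg)⟩, by
        show Phi0 l (skE 0 4 (-(l 2))) = l 2 * l 2 * l 2
        simp [Phi0, skE, Matrix.single, Matrix.sub_apply]
        try ring⟩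
    · exact LinearMap.mem_range.mpr ⟨⟨skE 0 4 (-(l 3)), skE_mem 0 4 (-(l 3)) ((hl 3).neg)⟩, by
        show Phi0 l (skE 0 4 (-(l 3))) = l 2 * l 2 * l 3
        simp [Phi0, skE, Matrix.single, Matrix.sub_apply]
        try ring⟩
    · exact LinearMap.mem_range.mpr ⟨⟨skE 0 4 (-(l 4)), skE_mem 0 4 (-(l 4)) ((hl 4).neg)⟩, by
        show Phi0 l (skE 0 4 (-(l 4))) = l 2 * l 2 * l 4
        simp [Phi0, skE, Matrix.single, Matrix.sub_apply]
        try ring⟩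
    · exact LinearMap.mem_range.mpr ⟨⟨skE 0 3 (l 3), skE_mem 0 3 (l 3) (hl 3)⟩, by
        show Phi0 l (skE 0 3 (l 3)) = l 2 * l 3 * l 3
        simp [Phi0, skE, Matrix.single, Matrix.sub_apply]
        try ring⟩
    · exact LinearMap.mem_range.mpr ⟨⟨skE 0 3 (l 4), skE_mem 0 3 (l 4) (hl 4)⟩, by
        show Phi0 l (skE 0 3 (l 4)) = l 2 * l 3 * l 4
        simp [Phi0, skE, Matrix.single, Matrix.sub_apply]
        try ring⟩

/-- Proposition 2.4 (Table 2), case (c). -/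
theorem tangent_space_type_c
    (l : Fin 5 → Rp) (hl : ∀ i, (l i).IsHomogeneous 1) (hind : LinearIndependent ℂ l)
    (M : Matrix (Fin 6) (Fin 6) Rp)
    (hM : M = !![0, l 0, l 1, 0, 0, 0;
                 -l 0, 0, l 2, 0, 0, 0;
                 -l 1, -l 2, 0, 0, 0, 0;
                 0, 0, 0, 0, l 1, l 2;
                 0, 0, 0, -l 1, 0, l 3;
                 0, 0, 0, -l 2, -l 3, 0]) :
    pf M = 0 ∧
    (∀ M' ∈ SkewLin, ∃! F : Rp, F.IsHomogeneous 3 ∧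
      pf (jet1 M M') = DualNumber.eps * TrivSqZeroExt.inl F) ∧
    ∃ Φ : SkewLin →ₗ[ℂ] Cubics,
      (∀ M' : SkewLin,
        pf (jet1 M M'.1) = DualNumber.eps * TrivSqZeroExt.inl (Φ M' : Rp)) ∧
      Module.finrank ℂ (LinearMap.range Φ) = 26 := by
  have hMeq : M = mtx l := hM
  subst hMeq
  refine ⟨pf_mtx l, ?_, ?_⟩
  · intro M' hM'
    refine ⟨Phi0 l M', ⟨Phi0_homog l hl M' hM'.2, pf_jet l M'⟩, ?_⟩
    rintro F ⟨hF1, hF2⟩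
    have h := hF2.symm.trans (pf_jet l M')
    have h2 := congrArg TrivSqZeroExt.snd h
    simpa using h2
  · refine ⟨PhiMap l hl, fun M' => pf_jet l M'.1, ?_⟩
    have hcomp : LinearMap.range ((Submodule.subtype Cubics).comp (PhiMap l hl))
        = Submodule.map (Submodule.subtype Cubics) (LinearMap.range (PhiMap l hl)) :=
      LinearMap.range_comp _ _
    have hfr : Module.finrank ℂ (LinearMap.range (PhiMap l hl))
        = Module.finrank ℂ
          (LinearMap.range ((Submodule.subtype Cubics).comp (PhiMap l hl))) := by
      rw [hcomp]
      exact (Submodule.equivMapOfInjective _ (Submodule.injective_subtype _) _).finrank_eq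
    rw [hfr, range_eq l hl hind]
    have hV : Module.finrank ℂ (Vsp l) = 26 := by
      rw [Vsp, finrank_span_eq_card (S26_li l hl hind)]
      simp
    exact hV
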